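/- Let B be a nondegenerate symmetric bilinear form on C^3 and let l_1, l_2, l_3 be pairwise distinct, pairwise B-orthogonal one-dimensional subspaces of C^3. Then the group of linear automorphisms g of C^3 with det(g) = 1, preserving B (i.e. B(g(u),g(v)) = B(u,v) for all u,v), and permuting the set {l_1, l_2, l_3}, has exactly 24 elements. -/

import Mathlib

/-!
Generators `v i` of the lines are pairwise orthogonal, and they are linearly independent: a
nontrivial relation `∑ a i • v i = 0` pairs with `v j` to `a j * B (v j) (v j) = 0`, so at least
two of the `v i` would be isotropic and span a totally isotropic plane, which a nondegenerate
form on a space of dimension `3 < 2 * 2` does not have. Rescaling them gives an orthonormal basis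
`b`. An element of the stabilizer permutes the lines, so it is monomial, `b i ↦ c i • b (σ i)`;
it is an isometry iff all `c i = ±1`, and then has determinant `sign σ * ∏ i, c i`. The
stabilizer is therefore the group of signed `3 × 3` permutation matrices of determinant one,
of order `3! * 2 ^ 2 = 24`.
-/

open Module Submodule

section Lines

variable {K V : Type*} [Field K] [AddCommGroup V] [Module K V]

theorem Submodule.exists_eq_span_singleton_of_finrank_eq_one {W : Submodule K V}
    (h : finrank K W = 1) : ∃ v : V, v ≠ 0 ∧ W = K ∙ v := by
  have := Module.finite_of_finrank_eq_succ h
  obtain ⟨v, hv⟩ := (W.finrank_le_one_iff_isPrincipal.mp h.le).principal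
  refine ⟨v, fun hv0 => ?_, hv⟩
  rw [hv, hv0, span_singleton_eq_bot.mpr rfl, finrank_bot] at h
  exact zero_ne_one h

theorem linearIndependent_pair_of_span_singleton_ne {x y : V} (hx : x ≠ 0) (hy : y ≠ 0)
    (h : K ∙ x ≠ K ∙ y) : LinearIndependent K ![x, y] := by
  rw [LinearIndependent.pair_iff' hx]
  rintro a rfl
  exact h (span_singleton_smul_eq (isUnit_iff_ne_zero.mpr (left_ne_zero_of_smul hy)) x).symm

end Lines

namespace LinearMap.BilinForm

variable {K V : Type*} [Field K] [AddCommGroup V] [Module K V] {B : LinearMap.BilinForm K V}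

theorem exists_orthonormal_basis_of_iIsOrtho [IsAlgClosed K] (hB : B.Nondegenerate)
    {ι : Type*} (b : Basis ι K V) (hb : B.iIsOrtho b) :
    ∃ b' : Basis ι K V, B.iIsOrtho b' ∧ (∀ i, B (b' i) (b' i) = 1) ∧
      ∀ i, K ∙ b' i = K ∙ b i := by
  have hdiag := hb.not_isOrtho_basis_self_of_nondegenerate hB
  choose s hs using fun i => IsAlgClosed.exists_pow_nat_eq (B (b i) (b i)) two_pos
  have hs0 : ∀ i, s i ≠ 0 := fun i h => hdiag i (by rw [← hs i, h, zero_pow two_ne_zero])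
  refine ⟨b.unitsSMul fun i => (Units.mk0 (s i) (hs0 i))⁻¹, ?_, fun i => ?_, fun i => ?_⟩
  · refine iIsOrtho_def.2 fun i j hij => ?_
    simp [Basis.unitsSMul_apply, Units.smul_def, iIsOrtho_def.1 hb i j hij]
  · simp only [Basis.unitsSMul_apply, Units.smul_def, map_smul, smul_apply, smul_eq_mul, ← hs i,
      Units.val_inv_eq_inv_val, Units.val_mk0]
    field_simp [hs0 i]
  · rw [Basis.unitsSMul_apply, Units.smul_def]
    exact span_singleton_smul_eq (Units.isUnit _) _

variable [FiniteDimensional K V]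

theorem two_mul_card_le_finrank_of_isotropic (hB : B.Nondegenerate) {ι : Type*} [Fintype ι]
    {v : ι → V} (hv : LinearIndependent K v) (hiso : ∀ i j, B (v i) (v j) = 0) :
    2 * Fintype.card ι ≤ finrank K V := by
  have hle : span K (Set.range v) ≤ B.orthogonal (span K (Set.range v)) := by
    intro u hu
    rw [mem_orthogonal_iff]
    intro w hw
    obtain ⟨a, rfl⟩ := (mem_span_range_iff_exists_fun K).mp hu
    obtain ⟨c, rfl⟩ := (mem_span_range_iff_exists_fun K).mp hw
    simp [hiso]
  have := Submodule.finrank_mono hle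
  rw [finrank_orthogonal hB, finrank_span_eq_card hv] at this
  omega

theorem linearIndependent_of_pairwise_orthogonal (hB : B.Nondegenerate)
    (hV : finrank K V < 4) {ι : Type*} [Fintype ι] {v : ι → V} (hv : ∀ i, v i ≠ 0)
    (hpair : Pairwise fun i j => LinearIndependent K ![v i, v j])
    (horth : Pairwise fun i j => B (v i) (v j) = 0) : LinearIndependent K v := by
  classical
  rw [Fintype.linearIndependent_iff]
  intro a ha k
  by_contra hak
  have hdiag : ∀ j, a j * B (v j) (v j) = 0 := by
    intro j
    have : B (v j) (∑ i, a i • v i) = 0 := by rw [ha, map_zero]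
    rwa [map_sum, Finset.sum_eq_single j (fun i _ hij => by rw [map_smul, horth hij.symm,
      smul_zero]) (by simp), map_smul, smul_eq_mul] at this
  obtain ⟨m, hmk, ham⟩ : ∃ m ≠ k, a m ≠ 0 := by
    by_contra! h
    rw [Finset.sum_eq_single k (fun i _ hik => by rw [h i hik, zero_smul]) (by simp)] at ha
    exact hak ((smul_eq_zero.mp ha).resolve_right (hv k))
  have hk := (mul_eq_zero.mp (hdiag k)).resolve_left hak
  have hm := (mul_eq_zero.mp (hdiag m)).resolve_left ham
  have := two_mul_card_le_finrank_of_isotropic hB (hpair hmk.symm) fun i j => by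
    fin_cases i <;> fin_cases j <;> simp [hk, hm, horth hmk, horth hmk.symm]
  rw [Fintype.card_fin] at this
  omega

theorem exists_orthonormal_basis_of_pairwise_orthogonal_lines [IsAlgClosed K]
    (hB : B.Nondegenerate) {ι : Type*} [Fintype ι] (hι : Fintype.card ι = finrank K V)
    (hV : finrank K V < 4) {l : ι → Submodule K V} (hl : ∀ i, finrank K (l i) = 1)
    (hdist : Pairwise fun i j => l i ≠ l j)
    (horth : Pairwise fun i j => ∀ u ∈ l i, ∀ w ∈ l j, B u w = 0) :
    ∃ b : Basis ι K V, B.iIsOrtho b ∧ (∀ i, B (b i) (b i) = 1) ∧ ∀ i, l i = K ∙ b i := by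
  choose v hv0 hlv using fun i => exists_eq_span_singleton_of_finrank_eq_one (hl i)
  have hvl : ∀ i, v i ∈ l i := fun i => hlv i ▸ mem_span_singleton_self _
  have hind : LinearIndependent K v := linearIndependent_of_pairwise_orthogonal hB hV hv0
    (fun i j hij => linearIndependent_pair_of_span_singleton_ne (hv0 i) (hv0 j)
      (hlv i ▸ hlv j ▸ hdist hij))
    (fun i j hij => horth hij _ (hvl i) _ (hvl j))
  let b₀ := basisOfLinearIndependentOfCardEqFinrank' v hind hι
  have hb₀ : ⇑b₀ = v := coe_basisOfLinearIndependentOfCardEqFinrank' _ _ _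
  obtain ⟨b, hbo, hbn, hbl⟩ := exists_orthonormal_basis_of_iIsOrtho hB b₀
    (iIsOrtho_def.2 fun i j hij => hb₀ ▸ horth hij _ (hvl i) _ (hvl j))
  exact ⟨b, hbo, hbn, fun i => by rw [hbl, hb₀, hlv]⟩

end LinearMap.BilinForm

namespace Module.Basis

section CommRing

variable {R M ι : Type*} [CommRing R] [AddCommGroup M] [Module R M] (b : Basis ι R M)

noncomputable def monomialEquiv (σ : Equiv.Perm ι) (c : ι → Rˣ) : M ≃ₗ[R] M :=
  b.equiv (b.unitsSMul fun j => c (σ.symm j)) σ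

@[simp]
theorem monomialEquiv_apply_self (σ : Equiv.Perm ι) (c : ι → Rˣ) (i : ι) :
    b.monomialEquiv σ c (b i) = c i • b (σ i) := by
  simp [monomialEquiv, Basis.equiv_apply, Basis.unitsSMul_apply]

theorem span_singleton_injective [Nontrivial R] : Function.Injective fun i => R ∙ b i := by
  intro i j (h : R ∙ b i = R ∙ b j)
  obtain ⟨a, ha⟩ := mem_span_singleton.mp (h ▸ mem_span_singleton_self (b i))
  have := congrArg b.repr ha
  simp only [map_smul, repr_self, Finsupp.smul_single, smul_eq_mul, mul_one] at this
  rcases (Finsupp.single_eq_single_iff _ _ _ _).mp this with ⟨hji, -⟩ | ⟨-, h10⟩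
  · exact hji.symm
  · exact absurd h10 one_ne_zero

theorem map_monomialEquiv_span_singleton (σ : Equiv.Perm ι) (c : ι → Rˣ) (i : ι) :
    (R ∙ b i).map (b.monomialEquiv σ c : M →ₗ[R] M) = R ∙ b (σ i) := by
  rw [map_span, Set.image_singleton, LinearEquiv.coe_coe, monomialEquiv_apply_self,
    Units.smul_def, span_singleton_smul_eq (Units.isUnit _)]

theorem monomialEquiv_inj [Nontrivial R] {σ τ : Equiv.Perm ι} {c d : ι → Rˣ} :
    b.monomialEquiv σ c = b.monomialEquiv τ d ↔ σ = τ ∧ c = d := by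
  refine ⟨fun h => ?_, fun ⟨hστ, hcd⟩ => hστ ▸ hcd ▸ rfl⟩
  have key : ∀ i, σ i = τ i ∧ c i = d i := by
    intro i
    have := congrArg b.repr (LinearEquiv.congr_fun h (b i))
    simp only [monomialEquiv_apply_self, Units.smul_def, map_smul, repr_self,
      Finsupp.smul_single, smul_eq_mul, mul_one] at this
    rcases (Finsupp.single_eq_single_iff _ _ _ _).mp this with ⟨hσ, hc⟩ | ⟨hc, -⟩
    · exact ⟨hσ, Units.ext hc⟩
    · exact absurd hc (c i).ne_zero
  exact ⟨Equiv.ext fun i => (key i).1, funext fun i => (key i).2⟩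

theorem det_monomialEquiv [Fintype ι] [DecidableEq ι] (σ : Equiv.Perm ι) (c : ι → Rˣ) :
    LinearMap.det (b.monomialEquiv σ c : M →ₗ[R] M) = Equiv.Perm.sign σ * ∏ i, (c i : R) := by
  rw [← LinearMap.det_toMatrix b]
  have : LinearMap.toMatrix b b (b.monomialEquiv σ c) =
      (Matrix.diagonal fun i => (c i : R)).submatrix σ.symm id := by
    ext i j
    simp only [LinearMap.toMatrix_apply, LinearEquiv.coe_coe, monomialEquiv_apply_self,
      Units.smul_def, map_smul, repr_self, Finsupp.smul_apply, Finsupp.single_apply,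
      Matrix.submatrix_apply, Matrix.diagonal_apply, id, Equiv.symm_apply_eq, smul_eq_mul,
      mul_ite, mul_one, mul_zero]
    by_cases h : σ j = i
    · subst h; simp
    · simp [h, Ne.symm h]
  rw [this, Matrix.det_permute, Matrix.det_diagonal, Equiv.Perm.sign_symm]

theorem isOrthogonal_monomialEquiv_iff {B : LinearMap.BilinForm R M} (hbo : B.iIsOrtho b)
    (hbn : ∀ i, B (b i) (b i) = 1) (σ : Equiv.Perm ι) (c : ι → Rˣ) :
    B.IsOrthogonal (b.monomialEquiv σ c) ↔ ∀ i, (c i : R) ^ 2 = 1 := by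
  constructor
  · intro h i
    simpa [Units.smul_def, hbn, sq] using h (b i) (b i)
  · intro h
    have : B.compl₁₂ (b.monomialEquiv σ c : M →ₗ[R] M) (b.monomialEquiv σ c) = B := by
      refine LinearMap.BilinForm.ext_basis b fun i j => ?_
      rcases eq_or_ne i j with rfl | hij
      · simp [Units.smul_def, hbn, ← sq, h]
      · simp [Units.smul_def, LinearMap.BilinForm.iIsOrtho_def.1 hbo _ _ hij,
          LinearMap.BilinForm.iIsOrtho_def.1 hbo _ _ (σ.injective.ne hij)]
    intro x y
    exact LinearMap.congr_fun₂ this x y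

end CommRing

section Field

variable {K V ι : Type*} [Field K] [AddCommGroup V] [Module K V] [Finite ι]

theorem exists_monomialEquiv_eq (b : Basis ι K V) (g : V ≃ₗ[K] V)
    (hg : ∀ i, ∃ j, (K ∙ b i).map (g : V →ₗ[K] V) = K ∙ b j) :
    ∃ σ c, b.monomialEquiv σ c = g := by
  choose τ hτ using hg
  have hτ_inj : Function.Injective τ := fun i j hij => b.span_singleton_injective <|
    map_injective_of_injective g.injective (by simp only [hτ, hij])
  set σ := Equiv.ofBijective τ (Finite.injective_iff_bijective.mp hτ_inj)
  have hmem : ∀ i, ∃ a : K, a • b (σ i) = g (b i) := fun i =>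
    mem_span_singleton.mp (hτ i ▸ mem_map_of_mem (mem_span_singleton_self (b i)))
  choose a ha using hmem
  have ha0 : ∀ i, a i ≠ 0 := fun i h0 => b.ne_zero i <|
    g.map_eq_zero_iff.mp (by rw [← ha i, h0, zero_smul])
  refine ⟨σ, fun i => Units.mk0 (a i) (ha0 i), LinearEquiv.toLinearMap_injective <|
    b.ext fun i => ?_⟩
  simp [Units.smul_def, ha]

end Field

end Module.Basis

section Signs

variable {R : Type*} [Ring R]

theorem Units.map_intCastRingHom_injective [Nontrivial R] (hR : ringChar R ≠ 2) :
    Function.Injective (Units.map (Int.castRingHom R : ℤ →* R)) := by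
  have hR' := Ring.neg_one_ne_one_of_char_ne_two hR
  intro ε δ h
  have h' : ((ε : ℤ) : R) = (δ : ℤ) := congrArg Units.val h
  rcases Int.units_eq_one_or ε with rfl | rfl <;> rcases Int.units_eq_one_or δ with rfl | rfl
  · rfl
  · exact absurd (by simpa using h'.symm) hR'
  · exact absurd (by simpa using h') hR'
  · rfl

theorem Units.exists_map_intCastRingHom_eq [NoZeroDivisors R] (u : Rˣ) (hu : (u : R) ^ 2 = 1) :
    ∃ ε : ℤˣ, Units.map (Int.castRingHom R : ℤ →* R) ε = u := by
  rcases mul_self_eq_one_iff.mp (sq (u : R) ▸ hu) with h | h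
  · exact ⟨1, Units.ext (by simp [h])⟩
  · exact ⟨-1, Units.ext (by simp [h])⟩

end Signs

section Stabilizer

variable {K V ι : Type*} [Field K] [AddCommGroup V] [Module K V]

def specialOrthogonalStabilizer (B : LinearMap.BilinForm K V) (l : ι → Submodule K V) :
    Set (V ≃ₗ[K] V) :=
  {g | LinearMap.det (g : V →ₗ[K] V) = 1 ∧ B.IsOrthogonal g ∧
    ∀ i, ∃ j, (l i).map (g : V →ₗ[K] V) = l j}

theorem specialOrthogonalStabilizer_eq_range [Fintype ι] [DecidableEq ι] (hK : ringChar K ≠ 2)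
    {B : LinearMap.BilinForm K V} (b : Basis ι K V) (hbo : B.iIsOrtho b)
    (hbn : ∀ i, B (b i) (b i) = 1) :
    specialOrthogonalStabilizer B (fun i => K ∙ b i) =
      Set.range fun p : {p : Equiv.Perm ι × (ι → ℤˣ) // Equiv.Perm.sign p.1 = ∏ i, p.2 i} =>
        b.monomialEquiv p.1.1 (Units.map (Int.castRingHom K : ℤ →* K) ∘ p.1.2) := by
  have hdet : ∀ σ (ε : ι → ℤˣ),
      LinearMap.det (b.monomialEquiv σ (Units.map (Int.castRingHom K : ℤ →* K) ∘ ε) : V →ₗ[K] V)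
        = (Units.map (Int.castRingHom K : ℤ →* K) (Equiv.Perm.sign σ * ∏ i, ε i) : K) := by
    intro σ ε
    simp [b.det_monomialEquiv]
  ext g
  constructor
  · rintro ⟨hg_det, hg_orth, hg_lines⟩
    obtain ⟨σ, c, rfl⟩ := b.exists_monomialEquiv_eq g hg_lines
    choose ε hε using fun i => Units.exists_map_intCastRingHom_eq (c i)
      ((b.isOrthogonal_monomialEquiv_iff hbo hbn σ c).mp hg_orth i)
    obtain rfl : Units.map (Int.castRingHom K : ℤ →* K) ∘ ε = c := funext hε
    refine ⟨⟨(σ, ε), ?_⟩, rfl⟩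
    rw [hdet, ← Units.val_one, Units.val_inj,
      ← map_one (Units.map (Int.castRingHom K : ℤ →* K))] at hg_det
    rw [eq_inv_of_mul_eq_one_left (Units.map_intCastRingHom_injective hK hg_det),
      Int.units_inv_eq_self]
  · rintro ⟨⟨⟨σ, ε⟩, hσε⟩, rfl⟩
    refine ⟨?_, (b.isOrthogonal_monomialEquiv_iff hbo hbn σ _).mpr fun i => ?_,
      fun i => ⟨σ i, b.map_monomialEquiv_span_singleton σ _ i⟩⟩
    · rw [hdet, hσε, Int.units_mul_self, map_one, Units.val_one]
    · rw [← Units.val_pow_eq_pow_val, Function.comp_apply, ← map_pow, Int.units_sq, map_one,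
        Units.val_one]

theorem ncard_specialOrthogonalStabilizer [Fintype ι] [DecidableEq ι] (hK : ringChar K ≠ 2)
    {B : LinearMap.BilinForm K V} (b : Basis ι K V) (hbo : B.iIsOrtho b)
    (hbn : ∀ i, B (b i) (b i) = 1) :
    (specialOrthogonalStabilizer B fun i => K ∙ b i).ncard =
      Fintype.card {p : Equiv.Perm ι × (ι → ℤˣ) // Equiv.Perm.sign p.1 = ∏ i, p.2 i} := by
  rw [specialOrthogonalStabilizer_eq_range hK b hbo hbn, Set.ncard_range_of_injective,
    Nat.card_eq_fintype_card]
  intro p q h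
  obtain ⟨⟨σ, ε⟩, _⟩ := p
  obtain ⟨⟨τ, δ⟩, _⟩ := q
  obtain ⟨rfl, hεδ⟩ := b.monomialEquiv_inj.mp h
  simp only [Subtype.mk.injEq, Prod.mk.injEq, true_and]
  exact (Units.map_intCastRingHom_injective hK).comp_left hεδ

end Stabilizer

theorem stabilizer_of_orthogonal_triple_has_24_elements_general
    (B : (Fin 3 → ℂ) →ₗ[ℂ] (Fin 3 → ℂ) →ₗ[ℂ] ℂ)
    (hB : B.Nondegenerate)
    (l : Fin 3 → Submodule ℂ (Fin 3 → ℂ))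
    (hdim : ∀ i, Module.finrank ℂ (l i) = 1)
    (hdist : ∀ i j, i ≠ j → l i ≠ l j)
    (horth : ∀ i j, i ≠ j → ∀ u ∈ l i, ∀ v ∈ l j, B u v = 0) :
    {g : (Fin 3 → ℂ) ≃ₗ[ℂ] (Fin 3 → ℂ) |
      LinearMap.det (g : (Fin 3 → ℂ) →ₗ[ℂ] (Fin 3 → ℂ)) = 1 ∧
      (∀ u v, B (g u) (g v) = B u v) ∧
      (∀ i, ∃ j, Submodule.map (g : (Fin 3 → ℂ) →ₗ[ℂ] (Fin 3 → ℂ)) (l i) = l j)}.ncard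
      = 24 := by
  obtain ⟨b, hbo, hbn, hl⟩ :=
    LinearMap.BilinForm.exists_orthonormal_basis_of_pairwise_orthogonal_lines hB (by simp)
      (by simp) hdim (fun i j => hdist i j) (fun i j => horth i j)
  obtain rfl : l = fun i => ℂ ∙ b i := funext hl
  change (specialOrthogonalStabilizer B fun i => ℂ ∙ b i).ncard = 24
  rw [ncard_specialOrthogonalStabilizer (by simp [ringChar.eq_zero]) b hbo hbn]
  decide

/-- The stabilizer, in the determinant-one isometry group of a nondegenerate
symmetric bilinear form on `ℂ³`, of an (unordered) triple of pairwise distinct,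
pairwise orthogonal lines has exactly `24` elements. -/
theorem stabilizer_of_orthogonal_triple_has_24_elements
    (B : (Fin 3 → ℂ) →ₗ[ℂ] (Fin 3 → ℂ) →ₗ[ℂ] ℂ)
    (hB : B.Nondegenerate) (hsymm : ∀ u v, B u v = B v u)
    (l : Fin 3 → Submodule ℂ (Fin 3 → ℂ))
    (hdim : ∀ i, Module.finrank ℂ (l i) = 1)
    (hdist : ∀ i j, i ≠ j → l i ≠ l j)
    (horth : ∀ i j, i ≠ j → ∀ u ∈ l i, ∀ v ∈ l j, B u v = 0) :
    {g : (Fin 3 → ℂ) ≃ₗ[ℂ] (Fin 3 → ℂ) |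
      LinearMap.det (g : (Fin 3 → ℂ) →ₗ[ℂ] (Fin 3 → ℂ)) = 1 ∧
      (∀ u v, B (g u) (g v) = B u v) ∧
      (∀ i, ∃ j, Submodule.map (g : (Fin 3 → ℂ) →ₗ[ℂ] (Fin 3 → ℂ)) (l i) = l j)}.ncard
      = 24 :=
  stabilizer_of_orthogonal_triple_has_24_elements_general B hB l hdim hdist horth
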